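/- arXiv:1907.09114 — 2 statements merged into one kernel-verified Lean document; each statement's English description precedes it below -/
import Mathlib

section
/- Every formula φ of the basic epistemic language is valid on the class of all multi-agent belief models satisfying belief correctness if and only if φ is valid on the class of all multi-relational Kripke models whose accessibility relations are all reflexive. -/
/-- Explicit-belief language L₀ over atoms ℕ and agents `Fin n`. -/
inductive Form0 (n : ℕ) : Type
  | atom : ℕ → Form0 n
  | neg : Form0 n → Form0 n
  | conj : Form0 n → Form0 n → Form0 n
  | tri : Fin n → Form0 n → Form0 n

/-- Multi-agent belief base. -/
structure MBB (n : ℕ) where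
  base : Fin n → Set (Form0 n)
  state : Set ℕ

/-- Satisfaction of L₀-formulas at an MBB. -/
def sat0 {n : ℕ} (B : MBB n) : Form0 n → Prop
  | .atom p => p ∈ B.state
  | .neg a => ¬ sat0 B a
  | .conj a b => sat0 B a ∧ sat0 B b
  | .tri i a => a ∈ B.base i

/-- A correct MBB: every explicit belief is true at it. -/
def MBB.Correct {n : ℕ} (B : MBB n) : Prop := ∀ i : Fin n, ∀ a ∈ B.base i, sat0 B a

/-- Epistemic alternative relation: B Rᵢ B' iff B' satisfies everything in agent i's base at B. -/
def EpiAlt {n : ℕ} (i : Fin n) (B B' : MBB n) : Prop := ∀ a ∈ B.base i, sat0 B' a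

/-- Belief correctness of an MBM (B, C). -/
def BC {n : ℕ} (B : MBB n) (C : Set (MBB n)) : Prop :=
  B ∈ C ∧ ∀ B' ∈ C, ∀ i : Fin n, EpiAlt i B' B'

/-- Basic epistemic language L_EL. -/
inductive FormEL (n : ℕ) : Type
  | atom : ℕ → FormEL n
  | neg : FormEL n → FormEL n
  | conj : FormEL n → FormEL n → FormEL n
  | box : Fin n → FormEL n → FormEL n

/-- Satisfaction of L_EL at an MBM (B, C). -/
def satEL {n : ℕ} (C : Set (MBB n)) (B : MBB n) : FormEL n → Prop
  | .atom p => p ∈ B.state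
  | .neg a => ¬ satEL C B a
  | .conj a b => satEL C B a ∧ satEL C B b
  | .box i a => ∀ B' ∈ C, EpiAlt i B B' → satEL C B' a

/-- Multi-relational Kripke model. -/
structure Kripke (n : ℕ) where
  W : Type
  rel : Fin n → W → W → Prop
  val : ℕ → W → Prop

/-- Kripke satisfaction for L_EL. -/
def satK {n : ℕ} (M : Kripke n) (w : M.W) : FormEL n → Prop
  | .atom p => M.val p w
  | .neg a => ¬ satK M w a
  | .conj a b => satK M w a ∧ satK M w b
  | .box i a => ∀ v, M.rel i w v → satK M v a

/-!
A context `C` is itself a Kripke model, with `Rᵢ` as accessibility relations, and belief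
correctness makes them reflexive. Conversely, a world `w` of a Kripke model is encoded as the
belief base whose `i`-th base holds the `L₀`-formulas whose translation is `□ᵢ`-true at `w`.
Since the translation `L₀ → L_EL` is onto, `Rᵢ` between encoded worlds is exactly inclusion of
`□ᵢ`-theories, which contains `⇒ᵢ`; hence the encoding preserves truth, and reflexivity of `⇒ᵢ`
makes the encoded model belief correct.
-/

namespace Form0

def toFormEL {n : ℕ} : Form0 n → FormEL n
  | .atom p => .atom p
  | .neg a => .neg a.toFormEL
  | .conj a b => .conj a.toFormEL b.toFormEL
  | .tri i a => .box i a.toFormEL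

end Form0

namespace FormEL

def toForm0 {n : ℕ} : FormEL n → Form0 n
  | .atom p => .atom p
  | .neg a => .neg a.toForm0
  | .conj a b => .conj a.toForm0 b.toForm0
  | .box i a => .tri i a.toForm0

theorem toForm0_toFormEL {n : ℕ} (ψ : FormEL n) : ψ.toForm0.toFormEL = ψ := by
  induction ψ <;> simp only [toForm0, Form0.toFormEL, *]

end FormEL

namespace Kripke

variable {n : ℕ} (M : Kripke n)

def toMBB (w : M.W) : MBB n where
  base i := {a | satK M w (.box i a.toFormEL)}
  state := {p | M.val p w}

theorem sat0_toMBB (a : Form0 n) (w : M.W) : sat0 (M.toMBB w) a ↔ satK M w a.toFormEL := by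
  induction a generalizing w with
  | atom p => rfl
  | neg a ih => simp only [sat0, satK, Form0.toFormEL, ih]
  | conj a b iha ihb => simp only [sat0, satK, Form0.toFormEL, iha, ihb]
  | tri i a => rfl

theorem epiAlt_toMBB_iff (i : Fin n) (w v : M.W) :
    EpiAlt i (M.toMBB w) (M.toMBB v) ↔ ∀ ψ : FormEL n, satK M w (.box i ψ) → satK M v ψ := by
  constructor
  · intro h ψ hψ
    rw [← ψ.toForm0_toFormEL] at hψ ⊢
    exact (M.sat0_toMBB _ v).1 (h _ hψ)
  · intro h a ha
    exact (M.sat0_toMBB a v).2 (h _ ha)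

theorem epiAlt_toMBB_of_rel {i : Fin n} {w v : M.W} (hwv : M.rel i w v) :
    EpiAlt i (M.toMBB w) (M.toMBB v) :=
  (M.epiAlt_toMBB_iff i w v).2 fun _ hψ => hψ v hwv

theorem satEL_toMBB (ψ : FormEL n) (w : M.W) :
    satEL (Set.range M.toMBB) (M.toMBB w) ψ ↔ satK M w ψ := by
  induction ψ generalizing w with
  | atom p => rfl
  | neg a ih => simp only [satEL, satK, ih]
  | conj a b iha ihb => simp only [satEL, satK, iha, ihb]
  | box i a ih =>
    simp only [satEL, satK, Set.forall_mem_range, ih]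
    constructor
    · exact fun h v hwv => h v (M.epiAlt_toMBB_of_rel hwv)
    · exact fun h v hE => (M.epiAlt_toMBB_iff i w v).1 hE a h

theorem bc_toMBB (hrefl : ∀ (i : Fin n) (w : M.W), M.rel i w w) (w : M.W) :
    BC (M.toMBB w) (Set.range M.toMBB) :=
  ⟨⟨w, rfl⟩, Set.forall_mem_range.2 fun v i => M.epiAlt_toMBB_of_rel (hrefl i v)⟩

def ofContext (C : Set (MBB n)) : Kripke n where
  W := C
  rel i B B' := EpiAlt i B B'
  val p B := p ∈ B.1.state

theorem satK_ofContext (C : Set (MBB n)) (ψ : FormEL n) (B : C) :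
    satK (ofContext C) B ψ ↔ satEL C B ψ := by
  induction ψ generalizing B with
  | atom p => rfl
  | neg a ih => simp only [satK, satEL, ih]
  | conj a b iha ihb => simp only [satK, satEL, iha, ihb]
  | box i a ih => exact ⟨fun h B' hB' hE => (ih ⟨B', hB'⟩).1 (h ⟨B', hB'⟩ hE),
      fun h (B' : C) hE => (ih B').2 (h B' B'.2 hE)⟩

end Kripke

/-- validity on belief-correct MBMs coincides with validity on reflexive Kripke
models. -/
theorem stmt4 (n : ℕ) (φ : FormEL n) :
    (∀ (B : MBB n) (C : Set (MBB n)), BC B C → satEL C B φ) ↔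
      (∀ M : Kripke n, (∀ (i : Fin n) (w : M.W), M.rel i w w) → ∀ w : M.W, satK M w φ) := by
  constructor
  · intro hvalid M hrefl w
    exact (M.satEL_toMBB φ w).1 (hvalid _ _ (M.bc_toMBB hrefl w))
  · intro hvalid B C ⟨hB, hCrefl⟩
    have hrefl : ∀ (i : Fin n) (B' : C), (Kripke.ofContext C).rel i B' B' :=
      fun i B' => hCrefl B' B'.2 i
    exact (Kripke.satK_ofContext C φ ⟨B, hB⟩).1 (hvalid _ hrefl _)
end

section
/- A formula φ of the basic epistemic language is valid on the class of all belief-correct multi-agent belief models if and only if (B, U_BC) ⊨ φ for every correct MBB B, where U_BC is the class of all correct MBBs (the universal context with belief correctness). -/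
/-!
The direction from left to right holds because `U_BC` is itself belief-correct. Conversely, a
belief-correct context is a reflexive Kripke model, and filtering it through the subformulas of `φ`
gives a finite reflexive countermodel, whose worlds we tag with fresh "mark" atoms. A world `w` is
realized as the MBB in which agent `i` believes that the mark of some `i`-successor of `w` holds and,
for each such successor `v`, that the mark of `v` implies every `L₀`-formula true at the realization
of `v`. These beliefs are true at `w`'s own realization by reflexivity, and the correct MBBs
satisfying them are exactly the realizations of the `i`-successors of `w`. So realization is a
bounded morphism into `U_BC`, and it preserves the failure of `φ`.
-/

namespace Form0

variable {n : ℕ}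

def falsum : Form0 n := .conj (.atom 0) (.neg (.atom 0))

def imp (a b : Form0 n) : Form0 n := .neg (.conj a (.neg b))

def bigDisj : List (Form0 n) → Form0 n
  | [] => falsum
  | a :: l => .neg (.conj (.neg a) (.neg (bigDisj l)))

theorem bigDisj_ne_imp_atom (l : List (Form0 n)) (m : ℕ) (b : Form0 n) :
    bigDisj l ≠ imp (.atom m) b := by
  cases l <;> simp [bigDisj, imp, falsum]

end Form0

section Sat0

variable {n : ℕ} {B : MBB n}

@[simp]
theorem sat0_imp {a b : Form0 n} : sat0 B (a.imp b) ↔ (sat0 B a → sat0 B b) := by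
  simp [Form0.imp, sat0]

theorem sat0_bigDisj {l : List (Form0 n)} : sat0 B (Form0.bigDisj l) ↔ ∃ a ∈ l, sat0 B a := by
  induction l with
  | nil => simp [Form0.bigDisj, Form0.falsum, sat0]
  | cons a l ih =>
    simp only [Form0.bigDisj, sat0, ih, List.exists_mem_cons_iff, not_and_or, not_not]

theorem MBB.eq_of_forall_sat0 {X Z : MBB n} (h : ∀ a, sat0 X a → sat0 Z a) : Z = X := by
  have hstate : Z.state = X.state := by
    ext q
    by_cases hq : q ∈ X.state
    · exact iff_of_true (h (.atom q) hq) hq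
    · exact iff_of_false (h (.neg (.atom q)) hq) hq
  have hbase : Z.base = X.base := by
    ext i a
    by_cases ha : a ∈ X.base i
    · exact iff_of_true (h (.tri i a) ha) ha
    · exact iff_of_false (h (.neg (.tri i a)) ha) ha
  cases X; cases Z; congr

end Sat0

section Kripke

variable {n : ℕ} {W : Type*}

def KSat (R : Fin n → W → W → Prop) (V : W → Set ℕ) (w : W) : FormEL n → Prop
  | .atom p => p ∈ V w
  | .neg a => ¬ KSat R V w a
  | .conj a b => KSat R V w a ∧ KSat R V w b
  | .box i a => ∀ u, R i w u → KSat R V u a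

theorem satEL_iff_kSat {R : Fin n → W → W → Prop} {V : W → Set ℕ} {C : Set (MBB n)}
    {T : W → MBB n} (mem : ∀ w, T w ∈ C) (state : ∀ w, (T w).state = V w)
    (forth : ∀ i w u, R i w u → EpiAlt i (T w) (T u))
    (back : ∀ i w Z, Z ∈ C → EpiAlt i (T w) Z → ∃ u, R i w u ∧ T u = Z)
    (w : W) (ψ : FormEL n) : satEL C (T w) ψ ↔ KSat R V w ψ := by
  induction ψ generalizing w with
  | atom p => simp [satEL, KSat, state]
  | neg a ih => simp [satEL, KSat, ih]
  | conj a b iha ihb => simp [satEL, KSat, iha, ihb]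
  | box i a ih =>
    simp only [satEL, KSat]
    constructor
    · intro h u hu
      exact (ih u).mp (h _ (mem u) (forth i w u hu))
    · rintro h Z hZ hwZ
      obtain ⟨u, hu, rfl⟩ := back i w Z hZ hwZ
      exact (ih u).mpr (h u hu)

theorem satEL_iff_kSat_context {C : Set (MBB n)} (B : C) (ψ : FormEL n) :
    satEL C B ψ ↔ KSat (fun i (X Y : C) => EpiAlt i X Y) (fun X => X.1.state) B ψ :=
  satEL_iff_kSat (T := Subtype.val) Subtype.prop (fun _ => rfl) (fun _ _ _ h => h)
    (fun _ _ Z hZ h => ⟨⟨Z, hZ⟩, h, rfl⟩) B ψ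

end Kripke

section Realization

variable {n : ℕ} {W : Type*} [Finite W] (R : Fin n → W → W → Prop) (V : W → Set ℕ)
  (mark : W → ℕ)

noncomputable def markDisj (i : Fin n) (w : W) : Form0 n :=
  .bigDisj ((Set.toFinite {u | R i w u}).toFinset.toList.map fun u => .atom (mark u))

/-- The truth of `a` at `realize R V mark u`. Agent `j`'s base at `u` is `markDisj j u` together
with the formulas `imp (atom (mark v)) b` for `R j u v` and `b` true at `v`, so the clause for
`tri j a` only recurses into a subterm of `a`. -/
noncomputable def RealizeSat : Form0 n → W → Prop
  | .atom q, u => q ∈ V u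
  | .neg a, u => ¬ RealizeSat a u
  | .conj a b, u => RealizeSat a u ∧ RealizeSat b u
  | .tri j (.neg (.conj (.atom m) (.neg b))), u => ∃ v, R j u v ∧ m = mark v ∧ RealizeSat b v
  | .tri j a, u => a = markDisj R mark j u

noncomputable def realize (w : W) : MBB n :=
  ⟨fun i => {a | RealizeSat R V mark (.tri i a) w}, V w⟩

theorem sat0_realize (w : W) (a : Form0 n) :
    sat0 (realize R V mark w) a ↔ RealizeSat R V mark a w := by
  induction a generalizing w with
  | atom q => rfl
  | neg a ih => simp [sat0, RealizeSat, ih]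
  | conj a b iha ihb => simp [sat0, RealizeSat, iha, ihb]
  | tri i a => rfl

theorem mem_realize_base {i : Fin n} {w : W} {a : Form0 n} :
    a ∈ (realize R V mark w).base i ↔
      a = markDisj R mark i w ∨
        ∃ v b, R i w v ∧ a = .imp (.atom (mark v)) b ∧ sat0 (realize R V mark v) b := by
  simp only [sat0_realize]
  show RealizeSat R V mark (.tri i a) w ↔ _
  by_cases himp : ∃ m b, a = .imp (.atom m) b
  · obtain ⟨m, b, rfl⟩ := himp
    rw [markDisj, or_iff_right (Form0.bigDisj_ne_imp_atom _ _ _).symm]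
    simp only [Form0.imp, RealizeSat.eq_4, Form0.neg.injEq, Form0.conj.injEq, Form0.atom.injEq]
    aesop
  · push Not at himp
    rw [RealizeSat.eq_5 _ _ _ _ _ _ himp]
    exact (or_iff_left fun ⟨v, b, _, hab, _⟩ => himp _ _ hab).symm

theorem sat0_markDisj {i : Fin n} {w : W} {Z : MBB n} :
    sat0 Z (markDisj R mark i w) ↔ ∃ u, R i w u ∧ mark u ∈ Z.state := by
  simp [markDisj, sat0_bigDisj, sat0]

variable {R V mark}

theorem epiAlt_realize (hmark : ∀ u w, mark u ∈ V w ↔ u = w) {i : Fin n} {w u : W}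
    (hwu : R i w u) : EpiAlt i (realize R V mark w) (realize R V mark u) := by
  intro a ha
  obtain rfl | ⟨v, b, -, rfl, hb⟩ := (mem_realize_base R V mark).mp ha
  · exact (sat0_markDisj R mark).mpr ⟨u, hwu, (hmark u u).mpr rfl⟩
  · rw [sat0_imp]
    intro hvu
    obtain rfl := (hmark v u).mp hvu
    exact hb

theorem realize_correct (hrefl : ∀ i w, R i w w) (hmark : ∀ u w, mark u ∈ V w ↔ u = w)
    (w : W) : (realize R V mark w).Correct :=
  fun i => epiAlt_realize hmark (hrefl i w)

theorem exists_eq_realize_of_epiAlt {i : Fin n} {w : W} {Z : MBB n}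
    (h : EpiAlt i (realize R V mark w) Z) : ∃ u, R i w u ∧ realize R V mark u = Z := by
  obtain ⟨u, hwu, hu⟩ :=
    (sat0_markDisj R mark).mp (h _ ((mem_realize_base R V mark).mpr (.inl rfl)))
  refine ⟨u, hwu, (MBB.eq_of_forall_sat0 fun b hb => ?_).symm⟩
  exact sat0_imp.mp (h _ ((mem_realize_base R V mark).mpr (.inr ⟨u, b, hwu, rfl, hb⟩))) hu

theorem satEL_realize_iff (hrefl : ∀ i w, R i w w) (hmark : ∀ u w, mark u ∈ V w ↔ u = w)
    (w : W) (ψ : FormEL n) :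
    satEL {B | B.Correct} (realize R V mark w) ψ ↔ KSat R V w ψ :=
  satEL_iff_kSat (realize_correct hrefl hmark) (fun _ => rfl)
    (fun _ _ _ => epiAlt_realize hmark) (fun _ _ _ _ => exists_eq_realize_of_epiAlt) w ψ

end Realization

namespace FormEL

variable {n : ℕ}

def subformulas : FormEL n → Set (FormEL n)
  | .atom p => {.atom p}
  | .neg a => insert (.neg a) a.subformulas
  | .conj a b => insert (.conj a b) (a.subformulas ∪ b.subformulas)
  | .box i a => insert (.box i a) a.subformulas

theorem mem_subformulas_self (φ : FormEL n) : φ ∈ φ.subformulas := by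
  cases φ <;> simp [subformulas]

theorem finite_subformulas (φ : FormEL n) : φ.subformulas.Finite := by
  induction φ with
  | atom p => exact Set.finite_singleton _
  | neg a ih => exact ih.insert _
  | conj a b iha ihb => exact (iha.union ihb).insert _
  | box i a ih => exact ih.insert _

theorem subformulas_subset {φ ψ : FormEL n} (h : ψ ∈ φ.subformulas) :
    ψ.subformulas ⊆ φ.subformulas := by
  induction φ with
  | atom p => rw [Set.mem_singleton_iff.mp h]
  | neg a ih =>
    rcases h with rfl | h
    · rfl
    · exact (ih h).trans (Set.subset_insert _ _)
  | conj a b iha ihb =>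
    rcases h with rfl | h | h
    · rfl
    · exact (iha h).trans (Set.subset_union_left.trans (Set.subset_insert _ _))
    · exact (ihb h).trans (Set.subset_union_right.trans (Set.subset_insert _ _))
  | box i a ih =>
    rcases h with rfl | h
    · rfl
    · exact (ih h).trans (Set.subset_insert _ _)

end FormEL

structure SubformulaClosed {n : ℕ} (Γ : Set (FormEL n)) : Prop where
  neg {a : FormEL n} : FormEL.neg a ∈ Γ → a ∈ Γ
  conj_left {a b : FormEL n} : FormEL.conj a b ∈ Γ → a ∈ Γ
  conj_right {a b : FormEL n} : FormEL.conj a b ∈ Γ → b ∈ Γ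
  box {i : Fin n} {a : FormEL n} : FormEL.box i a ∈ Γ → a ∈ Γ

theorem FormEL.subformulaClosed_subformulas {n : ℕ} (φ : FormEL n) :
    SubformulaClosed φ.subformulas where
  neg h := subformulas_subset h (by simp [subformulas, mem_subformulas_self])
  conj_left h := subformulas_subset h (by simp [subformulas, mem_subformulas_self])
  conj_right h := subformulas_subset h (by simp [subformulas, mem_subformulas_self])
  box h := subformulas_subset h (by simp [subformulas, mem_subformulas_self])

section Filtration

variable {n : ℕ} {W : Type*} (R : Fin n → W → W → Prop) (V : W → Set ℕ) (Γ : Set (FormEL n))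

def filtType (w : W) : Set (FormEL n) := {ψ | ψ ∈ Γ ∧ KSat R V w ψ}

abbrev toFilt : W → Set.range (filtType R V Γ) := Set.rangeFactorization (filtType R V Γ)

def filtRel (i : Fin n) : Set.range (filtType R V Γ) → Set.range (filtType R V Γ) → Prop :=
  Relation.Map (R i) (toFilt R V Γ) (toFilt R V Γ)

theorem finite_filt (hΓ : Γ.Finite) : Finite (Set.range (filtType R V Γ)) :=
  (hΓ.powerset.subset (Set.range_subset_iff.mpr fun _ => Set.sep_subset _ _)).to_subtype

variable {R V Γ}

theorem filtRel_refl (hrefl : ∀ i w, R i w w) (i : Fin n) (s : Set.range (filtType R V Γ)) :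
    filtRel R V Γ i s s := by
  obtain ⟨w, rfl⟩ := Set.rangeFactorization_surjective s
  exact ⟨w, w, hrefl i w, rfl, rfl⟩

theorem kSat_iff_of_toFilt_eq {x w : W} (h : toFilt R V Γ x = toFilt R V Γ w) {ψ : FormEL n}
    (hψ : ψ ∈ Γ) : KSat R V x ψ ↔ KSat R V w ψ := by
  have h' : ψ ∈ filtType R V Γ x ↔ ψ ∈ filtType R V Γ w := by
    rw [show filtType R V Γ x = filtType R V Γ w from congrArg Subtype.val h]
  simpa [filtType, hψ] using h'

theorem kSat_filt_iff (hΓ : SubformulaClosed Γ) {V' : Set.range (filtType R V Γ) → Set ℕ}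
    (hV' : ∀ w q, FormEL.atom q ∈ Γ → (q ∈ V' (toFilt R V Γ w) ↔ q ∈ V w))
    {ψ : FormEL n} (hψ : ψ ∈ Γ) (w : W) :
    KSat (filtRel R V Γ) V' (toFilt R V Γ w) ψ ↔ KSat R V w ψ := by
  induction ψ generalizing w with
  | atom q => exact hV' w q hψ
  | neg a ih => simp only [KSat, ih (hΓ.neg hψ)]
  | conj a b iha ihb => simp only [KSat, iha (hΓ.conj_left hψ), ihb (hΓ.conj_right hψ)]
  | box i a ih =>
    simp only [KSat]
    constructor
    · intro h u hwu
      exact (ih (hΓ.box hψ) u).mp (h _ ⟨w, u, hwu, rfl, rfl⟩)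
    · rintro h _ ⟨x, u, hxu, hxw, rfl⟩
      exact (ih (hΓ.box hψ) u).mpr ((kSat_iff_of_toFilt_eq hxw hψ).mpr h u hxu)

end Filtration

theorem exists_injective_forall_not_mem {W : Type*} [Finite W] {A : Set ℕ} (hA : A.Finite) :
    ∃ mark : W → ℕ, Function.Injective mark ∧ ∀ w, mark w ∉ A := by
  have : Infinite ↥Aᶜ := hA.infinite_compl.to_subtype
  let e : W ↪ ↥Aᶜ := (Finite.equivFin W).toEmbedding.trans
    (Fin.valEmbedding.trans (Infinite.natEmbedding _))
  exact ⟨fun w => e w, Subtype.val_injective.comp e.injective, fun w => (e w).2⟩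

theorem exists_finite_marked_model {n : ℕ} {W : Type*} {R : Fin n → W → W → Prop}
    {V : W → Set ℕ} (hrefl : ∀ i w, R i w w) (φ : FormEL n) (w : W) :
    ∃ (W' : Type) (_ : Finite W') (R' : Fin n → W' → W' → Prop) (V' : W' → Set ℕ)
      (mark : W' → ℕ) (w' : W'), (∀ i w, R' i w w) ∧ (∀ u v, mark u ∈ V' v ↔ u = v) ∧
        (KSat R' V' w' φ ↔ KSat R V w φ) := by
  have := finite_filt R V φ.subformulas φ.finite_subformulas
  obtain ⟨mark, hinj, hmark⟩ :=
    exists_injective_forall_not_mem (W := Set.range (filtType R V φ.subformulas))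
      (φ.finite_subformulas.preimage fun _ _ _ _ h => FormEL.atom.inj h)
  refine ⟨_, this, filtRel R V φ.subformulas, fun s => insert (mark s) {q | .atom q ∈ s.1},
    mark, toFilt R V φ.subformulas w, filtRel_refl hrefl, fun u v => ?_,
    kSat_filt_iff φ.subformulaClosed_subformulas (fun x q hq => ?_) φ.mem_subformulas_self w⟩
  · obtain ⟨x, hx⟩ := v.2
    simp only [Set.mem_insert_iff, Set.mem_ofPred_eq, hinj.eq_iff, ← hx]
    exact or_iff_left fun h => hmark u h.1
  · have hne : q ≠ mark (toFilt R V φ.subformulas x) := fun h => hmark _ (h ▸ hq)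
    simp [filtType, hq, KSat, or_iff_right hne]

/-- φ is valid on belief-correct MBMs iff (B, U_BC) ⊨ φ for every correct MBB B,
where U_BC is the class of all correct MBBs. -/
theorem stmt6 (n : ℕ) (φ : FormEL n) :
    (∀ (B : MBB n) (C : Set (MBB n)), BC B C → satEL C B φ) ↔
      (∀ B : MBB n, B.Correct → satEL {B' : MBB n | B'.Correct} B φ) := by
  refine ⟨fun h B hB => h B _ ⟨hB, fun _ hB' => hB'⟩, fun h B C hBC => ?_⟩
  obtain ⟨W, _, R, V, mark, w, hrefl, hmark, hφ⟩ :=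
    exists_finite_marked_model (R := fun i (X Y : C) => EpiAlt i X Y)
      (fun i X => hBC.2 X X.2 i) φ ⟨B, hBC.1⟩
  refine (satEL_iff_kSat_context ⟨B, hBC.1⟩ φ).mpr (hφ.mp ?_)
  exact (satEL_realize_iff hrefl hmark w φ).mp (h _ (realize_correct hrefl hmark w))
end
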